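/- arXiv:2312.02245 — 2 statements merged into one kernel-verified Lean document; each statement's English description precedes it below -/
import Mathlib

section
/- The series ∑_{n=1}^∞ 1/(n² · C(2n,n)) converges to π²/18. -/
/-!
By the Beta integral, `1 / ((n+1)² C(2n+2, n+1)) = ∫₀¹ xⁿ (1-x)ⁿ⁺¹ / (n+1) dx`. Summing under the
integral turns the series into `∫₀¹ -log (1 - x(1-x)) / x dx`, and since `1 - x + x² = (1+x³)/(1+x)`
the integrand is `(log (1+x) - log (1+x³)) / x`. Expanding these two logarithms instead and
integrating termwise gives `(2/3) ∑ (-1)ⁿ/(n+1)² = (2/3) (π²/12) = π²/18`. Both termwise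
integrations are justified by the bound `xⁿ/(n+1)` on the terms, whose integrals are summable.
-/

open Real MeasureTheory
open scoped Nat

theorem integral_pow_mul_one_sub_pow (m n : ℕ) :
    ∫ x in (0 : ℝ)..1, x ^ m * (1 - x) ^ n = (m ! * n ! : ℝ) / (m + n + 1)! := by
  have h := Complex.betaIntegral_eval_nat_add_one_right (u := m + 1) (by simp; positivity) n
  have hprod : ∏ j ∈ Finset.range (n + 1), ((m + 1 : ℂ) + j) = ((m + n + 1)! : ℂ) / m ! := by
    rw [eq_div_iff (by exact_mod_cast m.factorial_ne_zero), mul_comm]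
    exact_mod_cast (Nat.ascFactorial_eq_prod_range (m + 1) (n + 1)) ▸
      Nat.factorial_mul_ascFactorial m (n + 1)
  rw [Complex.betaIntegral, hprod] at h
  simp only [add_sub_cancel_right, Complex.cpow_natCast] at h
  rw [← Complex.ofReal_inj, ← intervalIntegral.integral_ofReal]
  push_cast
  rw [h]
  field_simp

theorem hasSum_one_div_succ_sq : HasSum (fun n : ℕ => 1 / ((n : ℝ) + 1) ^ 2) (π ^ 2 / 6) := by
  simpa using (hasSum_nat_add_iff' 1).mpr hasSum_zeta_two

theorem hasSum_neg_one_pow_div_succ_sq :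
    HasSum (fun n : ℕ => (-1) ^ n / ((n : ℝ) + 1) ^ 2) (π ^ 2 / 12) := by
  have hdiff : HasSum (fun n : ℕ => (1 - (-1) ^ n) / ((n : ℝ) + 1) ^ 2) (0 + π ^ 2 / 12) := by
    have h := hasSum_one_div_succ_sq.mul_left (1 / 2)
    rw [show 1 / 2 * (π ^ 2 / 6) = π ^ 2 / 12 by ring] at h
    refine HasSum.even_add_odd ?_ (h.congr_fun fun k => ?_)
    · simp
    · rw [pow_succ, pow_mul]
      push_cast
      field_simp
      ring
  have h := hasSum_one_div_succ_sq.sub hdiff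
  rw [show π ^ 2 / 6 - (0 + π ^ 2 / 12) = π ^ 2 / 12 by ring] at h
  exact h.congr_fun fun n => by ring

theorem intervalIntegral.hasSum_integral_of_summable_integral_norm {ι E : Type*} [Countable ι]
    [NormedAddCommGroup E] [NormedSpace ℝ E] {a b : ℝ} (hab : a ≤ b) {F : ι → ℝ → E}
    (hF_int : ∀ i, IntervalIntegrable (F i) volume a b)
    (hF_sum : Summable fun i ↦ ∫ x in a..b, ‖F i x‖) :
    HasSum (fun i ↦ ∫ x in a..b, F i x) (∫ x in a..b, ∑' i, F i x) := by
  simp only [intervalIntegral.integral_of_le hab] at hF_sum ⊢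
  exact MeasureTheory.hasSum_integral_of_summable_integral_norm (fun i ↦ (hF_int i).1) hF_sum

theorem hasSum_integral_of_abs_le_pow_div {F : ℕ → ℝ → ℝ} (hF : ∀ n, Continuous (F n))
    (hle : ∀ n, ∀ x ∈ Set.Icc (0 : ℝ) 1, |F n x| ≤ x ^ n / (n + 1)) :
    HasSum (fun n ↦ ∫ x in (0 : ℝ)..1, F n x) (∫ x in (0 : ℝ)..1, ∑' n, F n x) := by
  refine intervalIntegral.hasSum_integral_of_summable_integral_norm zero_le_one
    (fun n ↦ (hF n).intervalIntegrable 0 1) ?_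
  refine Summable.of_nonneg_of_le (fun n ↦ intervalIntegral.integral_nonneg zero_le_one
    fun x _ ↦ norm_nonneg _) (fun n ↦ ?_) hasSum_one_div_succ_sq.summable
  calc ∫ x in (0 : ℝ)..1, ‖F n x‖ ≤ ∫ x in (0 : ℝ)..1, x ^ n / (n + 1) :=
        intervalIntegral.integral_mono_on zero_le_one ((hF n).norm.intervalIntegrable 0 1)
          ((continuous_pow n).div_const _ |>.intervalIntegrable 0 1) (hle n)
    _ = 1 / ((n : ℝ) + 1) ^ 2 := by
        rw [intervalIntegral.integral_div, integral_pow]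
        field_simp
        simp

namespace CentralBinomSeries

noncomputable def betaTerm (n : ℕ) (x : ℝ) : ℝ := x ^ n * (1 - x) ^ (n + 1) / (n + 1)

noncomputable def logTerm (n : ℕ) (x : ℝ) : ℝ := (-1) ^ n / (n + 1) * (x ^ n - x ^ (3 * n + 2))

theorem continuous_betaTerm (n : ℕ) : Continuous (betaTerm n) := by
  unfold betaTerm; fun_prop

theorem continuous_logTerm (n : ℕ) : Continuous (logTerm n) := by
  unfold logTerm; fun_prop

theorem abs_betaTerm_le (n : ℕ) (x : ℝ) (hx : x ∈ Set.Icc (0 : ℝ) 1) :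
    |betaTerm n x| ≤ x ^ n / (n + 1) := by
  obtain ⟨hx₀, hx₁⟩ := hx
  have h1x : 0 ≤ 1 - x := sub_nonneg.2 hx₁
  rw [betaTerm, abs_of_nonneg (by positivity)]
  gcongr
  exact mul_le_of_le_one_right (by positivity) (pow_le_one₀ h1x (by linarith))

theorem abs_logTerm_le (n : ℕ) (x : ℝ) (hx : x ∈ Set.Icc (0 : ℝ) 1) :
    |logTerm n x| ≤ x ^ n / (n + 1) := by
  obtain ⟨hx₀, hx₁⟩ := hx
  have hpow : x ^ (3 * n + 2) ≤ x ^ n := pow_le_pow_of_le_one hx₀ hx₁ (by omega)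
  rw [logTerm, abs_mul, abs_div, abs_pow, abs_neg, abs_one, one_pow, abs_of_pos (by positivity),
    abs_of_nonneg (sub_nonneg.2 hpow), one_div_mul_eq_div]
  gcongr
  linarith [pow_nonneg hx₀ (3 * n + 2)]

theorem integral_betaTerm (n : ℕ) :
    ∫ x in (0 : ℝ)..1, betaTerm n x = 1 / ((n + 1) ^ 2 * Nat.choose (2 * (n + 1)) (n + 1)) := by
  have hchoose := Nat.choose_mul_factorial_mul_factorial (show n + 1 ≤ 2 * (n + 1) by omega)
  rw [show 2 * (n + 1) - (n + 1) = n + 1 by omega] at hchoose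
  simp only [betaTerm]
  rw [intervalIntegral.integral_div, integral_pow_mul_one_sub_pow,
    show n + (n + 1) + 1 = 2 * (n + 1) by omega, ← hchoose]
  push_cast [Nat.factorial_succ]
  field_simp

theorem integral_logTerm (n : ℕ) :
    ∫ x in (0 : ℝ)..1, logTerm n x = 2 / 3 * ((-1) ^ n / ((n : ℝ) + 1) ^ 2) := by
  simp only [logTerm, intervalIntegral.integral_const_mul]
  rw [intervalIntegral.integral_sub (intervalIntegral.intervalIntegrable_pow _)
    (intervalIntegral.intervalIntegrable_pow _), integral_pow, integral_pow]
  push_cast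
  field_simp
  ring

theorem hasSum_betaTerm {x : ℝ} (hx₀ : 0 < x) (hx₁ : x < 1) :
    HasSum (betaTerm · x) ((log (1 + x) - log (1 + x ^ 3)) / x) := by
  have hy : |x * (1 - x)| < 1 := by rw [abs_lt]; constructor <;> nlinarith
  have h := (hasSum_pow_div_log_of_abs_lt_one hy).div_const x
  have hlog : -log (1 - x * (1 - x)) = log (1 + x) - log (1 + x ^ 3) := by
    rw [show 1 - x * (1 - x) = (1 + x ^ 3) / (1 + x) by field_simp; ring,
      log_div (by positivity) (by positivity)]
    ring
  rw [hlog] at h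
  refine h.congr_fun fun n ↦ ?_
  rw [betaTerm, mul_pow]
  field_simp
  ring

theorem hasSum_logTerm {x : ℝ} (hx₀ : 0 < x) (hx₁ : x < 1) :
    HasSum (logTerm · x) ((log (1 + x) - log (1 + x ^ 3)) / x) := by
  have h₁ := hasSum_pow_div_log_of_abs_lt_one (x := -x)
    (by rw [abs_neg, abs_of_pos hx₀]; exact hx₁)
  have h₃ := hasSum_pow_div_log_of_abs_lt_one (x := -x ^ 3)
    (by rw [abs_neg, abs_of_pos (by positivity)]; exact pow_lt_one₀ hx₀.le hx₁ (by norm_num))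
  rw [sub_neg_eq_add] at h₁ h₃
  have h := (h₃.sub h₁).div_const x
  rw [neg_sub_neg] at h
  refine h.congr_fun fun n ↦ ?_
  rw [logTerm, neg_pow (x ^ 3), neg_pow x, ← pow_mul]
  field_simp
  ring

theorem integral_tsum_betaTerm_eq_integral_tsum_logTerm :
    ∫ x in (0 : ℝ)..1, ∑' n, betaTerm n x = ∫ x in (0 : ℝ)..1, ∑' n, logTerm n x := by
  refine intervalIntegral.integral_congr_ae ?_
  filter_upwards [volume.ae_ne 1] with x hx₁ hx
  rw [Set.uIoc_of_le zero_le_one] at hx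
  have hx₁' : x < 1 := lt_of_le_of_ne hx.2 hx₁
  rw [(hasSum_betaTerm hx.1 hx₁').tsum_eq, (hasSum_logTerm hx.1 hx₁').tsum_eq]

end CentralBinomSeries

theorem stmt1 :
    HasSum (fun n : ℕ => (1 : ℝ) / ((n + 1) ^ 2 * Nat.choose (2 * (n + 1)) (n + 1)))
      (π ^ 2 / 18) := by
  have hbeta := hasSum_integral_of_abs_le_pow_div CentralBinomSeries.continuous_betaTerm
    CentralBinomSeries.abs_betaTerm_le
  have hlog := hasSum_integral_of_abs_le_pow_div CentralBinomSeries.continuous_logTerm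
    CentralBinomSeries.abs_logTerm_le
  simp only [CentralBinomSeries.integral_betaTerm] at hbeta
  simp only [CentralBinomSeries.integral_logTerm] at hlog
  rw [CentralBinomSeries.integral_tsum_betaTerm_eq_integral_tsum_logTerm,
    hlog.unique (hasSum_neg_one_pow_div_succ_sq.mul_left (2 / 3))] at hbeta
  rwa [show 2 / 3 * (π ^ 2 / 12) = π ^ 2 / 18 by ring] at hbeta
end

section
/- For x in (-1,1), (arcsin x)² = ∑_{n=1}^∞ (2x)^{2n} / (2·n²·C(2n,n)). -/
/-!
Let `b n = 4ⁿ / ((2n+1) C(2n,n))` and `T x = ∑ b n x²ⁿ⁺¹`. The recurrence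
`(2n+3) b (n+1) = (2n+2) b n` turns into the differential equation `(1 - x²) T' = 1 + x T`.
That equation says exactly that `√(1 - x²) T` has derivative `1 / √(1 - x²)`, so
`√(1 - x²) T = arcsin`. The series of the theorem is the termwise antiderivative of `2 T`
vanishing at `0`, and `2 T = 2 arcsin / √(1 - x²)` is also the derivative of `arcsin²`.
-/

open Set

lemma eqOn_Ioo_of_hasDerivAt {f g f' : ℝ → ℝ} {a b c : ℝ}
    (hf : ∀ x ∈ Ioo a b, HasDerivAt f (f' x) x) (hg : ∀ x ∈ Ioo a b, HasDerivAt g (f' x) x)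
    (hc : c ∈ Ioo a b) (hfg : f c = g c) : EqOn f g (Ioo a b) :=
  isOpen_Ioo.eqOn_of_deriv_eq isPreconnected_Ioo
    (fun x hx => (hf x hx).differentiableAt.differentiableWithinAt)
    (fun x hx => (hg x hx).differentiableAt.differentiableWithinAt)
    (fun x hx => (hf x hx).deriv.trans (hg x hx).deriv.symm) hc hfg

lemma summable_two_mul_add_mul_geometric {r : ℝ} (hr : |r| < 1) (j : ℕ) :
    Summable fun n : ℕ => (2 * n + j + 1 : ℝ) * r ^ n := by
  have h₁ := (summable_pow_mul_geometric_of_norm_lt_one (R := ℝ) 1 hr).mul_left 2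
  have h₂ := (summable_geometric_of_abs_lt_one hr).mul_left ((j : ℝ) + 1)
  exact (h₁.add h₂).congr fun n => by ring

section BoundedCoefficients

variable {a : ℕ → ℝ} {j : ℕ}

lemma abs_mul_pow_two_mul_add_le (ha : ∀ n, |a n| ≤ 1) {r y : ℝ} (hy : |y| ≤ r) (hr : r ≤ 1)
    (n : ℕ) : |a n * y ^ (2 * n + j)| ≤ (r ^ 2) ^ n := by
  have hpow : |y| ^ (2 * n + j) ≤ r ^ (2 * n) :=
    (pow_le_pow_of_le_one (abs_nonneg y) (hy.trans hr) (by omega)).trans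
      (pow_le_pow_left₀ (abs_nonneg y) hy _)
  calc |a n * y ^ (2 * n + j)| = |a n| * |y| ^ (2 * n + j) := by rw [abs_mul, abs_pow]
    _ ≤ 1 * r ^ (2 * n) := mul_le_mul (ha n) hpow (by positivity) zero_le_one
    _ = (r ^ 2) ^ n := by rw [one_mul, pow_mul]

lemma abs_mul_two_mul_add_mul_pow_le (ha : ∀ n, |a n| ≤ 1) {r y : ℝ} (hy : |y| ≤ r) (hr : r ≤ 1)
    (n : ℕ) : |a n * (2 * n + j + 1) * y ^ (2 * n + j)| ≤ (2 * n + j + 1) * (r ^ 2) ^ n := by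
  rw [mul_right_comm, abs_mul, abs_of_pos (by positivity : (0 : ℝ) < 2 * n + j + 1), mul_comm]
  exact mul_le_mul_of_nonneg_left (abs_mul_pow_two_mul_add_le ha hy hr n) (by positivity)

lemma summable_mul_pow_two_mul_add (ha : ∀ n, |a n| ≤ 1) {x : ℝ} (hx : |x| < 1) :
    Summable fun n => a n * x ^ (2 * n + j) :=
  (summable_geometric_of_lt_one (sq_nonneg |x|) (by nlinarith [abs_nonneg x])).of_norm_bounded
    fun n => abs_mul_pow_two_mul_add_le ha le_rfl hx.le n

lemma summable_mul_two_mul_add_mul_pow (ha : ∀ n, |a n| ≤ 1) {x : ℝ} (hx : |x| < 1) :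
    Summable fun n => a n * (2 * n + j + 1) * x ^ (2 * n + j) :=
  (summable_two_mul_add_mul_geometric
    (by rw [abs_of_nonneg (sq_nonneg _)]; nlinarith [abs_nonneg x]) j).of_norm_bounded
    fun n => abs_mul_two_mul_add_mul_pow_le ha le_rfl hx.le n

theorem hasDerivAt_tsum_mul_pow_two_mul_add (ha : ∀ n, |a n| ≤ 1) {x : ℝ} (hx : |x| < 1) :
    HasDerivAt (fun y => ∑' n, a n * y ^ (2 * n + j + 1))
      (∑' n, a n * (2 * n + j + 1) * x ^ (2 * n + j)) x := by
  obtain ⟨r, hxr, hr⟩ := exists_between hx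
  have hr₀ : 0 < r := (abs_nonneg x).trans_lt hxr
  have hu := summable_two_mul_add_mul_geometric (r := r ^ 2)
    (by rw [abs_of_nonneg (sq_nonneg _)]; nlinarith) j
  have hsummable₀ : Summable fun n => a n * (0 : ℝ) ^ (2 * n + j + 1) :=
    summable_mul_pow_two_mul_add (j := j + 1) ha (by simp)
  have hderiv : ∀ n y, HasDerivAt (fun y => a n * y ^ (2 * n + j + 1))
      (a n * (2 * n + j + 1) * y ^ (2 * n + j)) y := fun n y =>
    ((hasDerivAt_pow _ y).const_mul (a n)).congr_deriv (by push_cast; ring)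
  have hbound : ∀ n, ∀ y ∈ Metric.ball (0 : ℝ) r,
      ‖a n * (2 * n + j + 1) * y ^ (2 * n + j)‖ ≤ (2 * n + j + 1) * (r ^ 2) ^ n := by
    intro n y hy
    rw [mem_ball_zero_iff, Real.norm_eq_abs] at hy
    exact abs_mul_two_mul_add_mul_pow_le ha hy.le hr.le n
  exact hasDerivAt_tsum_of_isPreconnected hu Metric.isOpen_ball (convex_ball 0 r).isPreconnected
    (fun n y _ => hderiv n y) hbound (Metric.mem_ball_self hr₀) hsummable₀
    (mem_ball_zero_iff.mpr hxr)

end BoundedCoefficients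

namespace ArcsinSq

noncomputable def coeff (n : ℕ) : ℝ := 4 ^ n / ((2 * n + 1) * n.centralBinom)

lemma coeff_zero : coeff 0 = 1 := by simp [coeff]

lemma coeff_pos (n : ℕ) : 0 < coeff n := by
  have := n.centralBinom_pos
  unfold coeff
  positivity

lemma coeff_succ (n : ℕ) : (2 * n + 3) * coeff (n + 1) = (2 * n + 2) * coeff n := by
  have h : ((n : ℝ) + 1) * (n + 1).centralBinom = 2 * (2 * n + 1) * n.centralBinom := by
    exact_mod_cast n.succ_mul_centralBinom_succ
  have := n.centralBinom_pos
  have := (n + 1).centralBinom_pos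
  unfold coeff
  field_simp
  push_cast
  linear_combination (-(2 * (n : ℝ) + 3)) * 4 ^ n * 2 * h

lemma coeff_le_one : ∀ n, coeff n ≤ 1
  | 0 => coeff_zero.le
  | n + 1 => by
    have := coeff_succ n
    have := coeff_le_one n
    have := coeff_pos n
    nlinarith

lemma abs_coeff_le_one (n : ℕ) : |coeff n| ≤ 1 := by
  rw [abs_of_pos (coeff_pos n)]
  exact coeff_le_one n

lemma abs_coeff_div_le_one (n : ℕ) : |coeff n / (n + 1)| ≤ 1 := by
  rw [abs_div, abs_of_pos (coeff_pos n), abs_of_pos (by positivity)]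
  exact div_le_one_of_le₀ (by linarith [coeff_le_one n, n.cast_nonneg (α := ℝ)]) (by positivity)

noncomputable def oddSeries (x : ℝ) : ℝ := ∑' n, coeff n * x ^ (2 * n + 1)

noncomputable def evenSeries (x : ℝ) : ℝ := ∑' n, coeff n / (n + 1) * x ^ (2 * n + 2)

lemma hasDerivAt_oddSeries {x : ℝ} (hx : |x| < 1) :
    HasDerivAt oddSeries (∑' n, coeff n * (2 * n + 1) * x ^ (2 * n)) x := by
  have h := hasDerivAt_tsum_mul_pow_two_mul_add (j := 0) abs_coeff_le_one hx
  simp only [add_zero, Nat.cast_zero] at h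
  exact h

lemma one_sub_sq_mul_deriv_oddSeries {x : ℝ} (hx : |x| < 1) :
    (1 - x ^ 2) * ∑' n, coeff n * (2 * n + 1) * x ^ (2 * n) = 1 + x * oddSeries x := by
  have hU := summable_mul_two_mul_add_mul_pow (j := 0) abs_coeff_le_one hx
  have hT := summable_mul_pow_two_mul_add (j := 1) abs_coeff_le_one hx
  simp only [add_zero, Nat.cast_zero] at hU
  have hshift : ∑' n, coeff (n + 1) * (2 * ↑(n + 1) + 1) * x ^ (2 * (n + 1)) =
      x ^ 2 * ∑' n, coeff n * (2 * n + 1) * x ^ (2 * n) + x * oddSeries x := by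
    rw [oddSeries, ← tsum_mul_left, ← tsum_mul_left, ← (hU.mul_left _).tsum_add (hT.mul_left _)]
    refine tsum_congr fun n => ?_
    push_cast
    linear_combination x ^ (2 * n + 2) * coeff_succ n
  have hrec := hU.tsum_eq_zero_add
  rw [hshift] at hrec
  simp only [coeff_zero] at hrec
  linear_combination hrec

lemma hasDerivAt_sqrt_one_sub_sq {y : ℝ} (hy : 1 - y ^ 2 ≠ 0) :
    HasDerivAt (fun z => √(1 - z ^ 2)) (-y / √(1 - y ^ 2)) y :=
  ((Real.hasDerivAt_sqrt hy).comp y ((hasDerivAt_pow 2 y).const_sub 1)).congr_deriv (by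
    simp only [Nat.cast_ofNat]
    ring)

lemma sqrt_one_sub_sq_mul_oddSeries {x : ℝ} (hx : x ∈ Ioo (-1 : ℝ) 1) :
    √(1 - x ^ 2) * oddSeries x = Real.arcsin x := by
  refine eqOn_Ioo_of_hasDerivAt (f := fun y => √(1 - y ^ 2) * oddSeries y) (fun y hy => ?_)
    (fun y hy => Real.hasDerivAt_arcsin hy.1.ne' hy.2.ne) (c := 0) (by norm_num)
    (by simp [oddSeries]) hx
  have hy' : |y| < 1 := abs_lt.mpr hy
  have h₀ : 0 < 1 - y ^ 2 := by nlinarith [hy.1, hy.2]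
  have hs := Real.sqrt_pos.mpr h₀
  refine ((hasDerivAt_sqrt_one_sub_sq h₀.ne').mul (hasDerivAt_oddSeries hy')).congr_deriv ?_
  field_simp
  linear_combination Real.sq_sqrt h₀.le * (∑' n, coeff n * (2 * n + 1) * y ^ (2 * n)) +
    one_sub_sq_mul_deriv_oddSeries hy'

lemma hasDerivAt_evenSeries {x : ℝ} (hx : |x| < 1) :
    HasDerivAt evenSeries (2 * oddSeries x) x := by
  refine (hasDerivAt_tsum_mul_pow_two_mul_add (j := 1) abs_coeff_div_le_one hx).congr_deriv ?_
  unfold oddSeries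
  rw [← tsum_mul_left]
  refine tsum_congr fun n => ?_
  field_simp
  push_cast
  ring

lemma evenSeries_eq_arcsin_sq {x : ℝ} (hx : x ∈ Ioo (-1 : ℝ) 1) :
    evenSeries x = Real.arcsin x ^ 2 := by
  refine eqOn_Ioo_of_hasDerivAt (g := fun y => Real.arcsin y ^ 2)
    (fun y hy => hasDerivAt_evenSeries (abs_lt.mpr hy))
    (fun y hy => ?_) (c := 0) (by norm_num) (by simp [evenSeries]) hx
  have hs := Real.sqrt_pos.mpr (show 0 < 1 - y ^ 2 by nlinarith [hy.1, hy.2])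
  refine ((Real.hasDerivAt_arcsin hy.1.ne' hy.2.ne).pow 2).congr_deriv ?_
  rw [← sqrt_one_sub_sq_mul_oddSeries hy]
  field_simp
  ring

lemma two_mul_pow_div_choose_eq (n : ℕ) (x : ℝ) :
    (2 * x) ^ (2 * (n + 1)) / (2 * (n + 1) ^ 2 * Nat.choose (2 * (n + 1)) (n + 1)) =
      coeff n / (n + 1) * x ^ (2 * n + 2) := by
  have h : ((n : ℝ) + 1) * (n + 1).centralBinom = 2 * (2 * n + 1) * n.centralBinom := by
    exact_mod_cast n.succ_mul_centralBinom_succ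
  have := n.centralBinom_pos
  have := (n + 1).centralBinom_pos
  rw [← Nat.centralBinom_eq_two_mul_choose, coeff, mul_pow, pow_mul,
    show (2 : ℝ) ^ 2 = 4 by norm_num, show 2 * n + 2 = 2 * (n + 1) by ring]
  field_simp
  linear_combination (-2 : ℝ) * x ^ (2 * (n + 1)) * 4 ^ n * h

end ArcsinSq

theorem stmt9 (x : ℝ) (hx : x ∈ Set.Ioo (-1 : ℝ) 1) :
    HasSum (fun n : ℕ => (2 * x) ^ (2 * (n + 1)) /
        (2 * (n + 1) ^ 2 * Nat.choose (2 * (n + 1)) (n + 1)))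
      (Real.arcsin x ^ 2) := by
  simp only [ArcsinSq.two_mul_pow_div_choose_eq]
  rw [← ArcsinSq.evenSeries_eq_arcsin_sq hx]
  exact (summable_mul_pow_two_mul_add (j := 2) ArcsinSq.abs_coeff_div_le_one
    (abs_lt.mpr hx)).hasSum
end
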